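/- Let N ≥ 2, h > 0, and let y = (y_0, …, y_N) be a real grid function with y_0 = y_N = 0. Define (H_h y)_i = (y_{i−1} + 10 y_i + y_{i+1})/12 for i = 1, …, N−1, and the norm ‖v‖₀² = Σ_{i=1}^{N−1} v_i² h. Then (5/12) ‖y‖₀² ≤ ‖H_h y‖₀² ≤ ‖y‖₀². -/

import Mathlib

/-!
Pointwise, `(a + 10 b + c) / 12` is a convex combination, so its square is at most
`(a² + 10 b² + c²) / 12`, while `2ab ≥ -(a² + b²)` bounds it below by
`(80 b² - 10 a² - 10 c²) / 144`.
Summing over `i`, the boundary values `y 0 = y N = 0` make the shifted sums `∑ y (i ∓ 1)²` at most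
`∑ y i²`, which yields the constants `12 / 12 = 1` and `(80 - 20) / 144 = 5 / 12`.
-/

open Finset

section ShiftedSums

variable {M : Type*} [AddCommMonoid M] [PartialOrder M] [IsOrderedAddMonoid M]

theorem sum_Ico_one_comp_pred_le {f : ℕ → M} (hf : ∀ i, 0 ≤ f i) (hf0 : f 0 = 0) (N : ℕ) :
    ∑ i ∈ Ico 1 N, f (i - 1) ≤ ∑ i ∈ Ico 1 N, f i := by
  have hshift : ∑ i ∈ Ico 1 N, f (i - 1) = ∑ i ∈ Ico 0 (N - 1), f i := by
    rw [sum_Ico_eq_sum_range, sum_Ico_eq_sum_range]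
    exact sum_congr (by congr 1) fun i _ => by simp
  rcases Nat.lt_or_ge 1 N with hN | hN
  · rw [hshift, sum_eq_sum_Ico_succ_bot (by omega), hf0, zero_add]
    exact sum_le_sum_of_subset_of_nonneg (Ico_subset_Ico le_rfl (by omega)) fun i _ _ => hf i
  · simp [Ico_eq_empty_of_le hN]

theorem sum_Ico_one_comp_succ_le {f : ℕ → M} (hf : ∀ i, 0 ≤ f i) {N : ℕ} (hfN : f N = 0) :
    ∑ i ∈ Ico 1 N, f (i + 1) ≤ ∑ i ∈ Ico 1 N, f i := by
  rw [sum_Ico_add']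
  rcases Nat.lt_or_ge 1 N with hN | hN
  · rw [sum_Ico_succ_top (by omega), hfN, add_zero]
    exact sum_le_sum_of_subset_of_nonneg (Ico_subset_Ico (by omega) le_rfl) fun i _ _ => hf i
  · rw [Ico_eq_empty_of_le hN, Ico_eq_empty_of_le (by omega)]

end ShiftedSums

section CompactAverage

noncomputable def compactAvg (y : ℕ → ℝ) (i : ℕ) : ℝ := (y (i - 1) + 10 * y i + y (i + 1)) / 12

variable (y : ℕ → ℝ)

theorem compactAvg_sq_le (i : ℕ) :
    compactAvg y i ^ 2 ≤ (y (i - 1) ^ 2 + 10 * y i ^ 2 + y (i + 1) ^ 2) / 12 := by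
  unfold compactAvg
  nlinarith [sq_nonneg (y (i - 1) - y i), sq_nonneg (y i - y (i + 1)),
    sq_nonneg (y (i - 1) - y (i + 1))]

theorem le_compactAvg_sq (i : ℕ) :
    (80 * y i ^ 2 - 10 * y (i - 1) ^ 2 - 10 * y (i + 1) ^ 2) / 144 ≤ compactAvg y i ^ 2 := by
  unfold compactAvg
  nlinarith [sq_nonneg (y (i - 1) + y i), sq_nonneg (y i + y (i + 1)),
    sq_nonneg (y (i - 1) + y (i + 1))]

theorem sum_compactAvg_sq_le {y : ℕ → ℝ} {N : ℕ} (hy0 : y 0 = 0) (hyN : y N = 0) :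
    ∑ i ∈ Ico 1 N, compactAvg y i ^ 2 ≤ ∑ i ∈ Ico 1 N, y i ^ 2 := by
  have hpred := sum_Ico_one_comp_pred_le (f := (y · ^ 2)) (fun _ => sq_nonneg _) (by simp [hy0]) N
  have hsucc :=
    sum_Ico_one_comp_succ_le (f := (y · ^ 2)) (fun _ => sq_nonneg _) (N := N) (by simp [hyN])
  calc ∑ i ∈ Ico 1 N, compactAvg y i ^ 2
      ≤ ∑ i ∈ Ico 1 N, (y (i - 1) ^ 2 + 10 * y i ^ 2 + y (i + 1) ^ 2) / 12 :=
        sum_le_sum fun i _ => compactAvg_sq_le y i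
    _ = ((∑ i ∈ Ico 1 N, y (i - 1) ^ 2) + 10 * ∑ i ∈ Ico 1 N, y i ^ 2
          + ∑ i ∈ Ico 1 N, y (i + 1) ^ 2) / 12 := by
        rw [← sum_div, sum_add_distrib, sum_add_distrib, mul_sum]
    _ ≤ ∑ i ∈ Ico 1 N, y i ^ 2 := by linarith

theorem le_sum_compactAvg_sq {y : ℕ → ℝ} {N : ℕ} (hy0 : y 0 = 0) (hyN : y N = 0) :
    5 / 12 * ∑ i ∈ Ico 1 N, y i ^ 2 ≤ ∑ i ∈ Ico 1 N, compactAvg y i ^ 2 := by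
  have hpred := sum_Ico_one_comp_pred_le (f := (y · ^ 2)) (fun _ => sq_nonneg _) (by simp [hy0]) N
  have hsucc :=
    sum_Ico_one_comp_succ_le (f := (y · ^ 2)) (fun _ => sq_nonneg _) (N := N) (by simp [hyN])
  calc 5 / 12 * ∑ i ∈ Ico 1 N, y i ^ 2
      ≤ (80 * ∑ i ∈ Ico 1 N, y i ^ 2 - 10 * (∑ i ∈ Ico 1 N, y (i - 1) ^ 2)
          - 10 * ∑ i ∈ Ico 1 N, y (i + 1) ^ 2) / 144 := by linarith
    _ = ∑ i ∈ Ico 1 N, (80 * y i ^ 2 - 10 * y (i - 1) ^ 2 - 10 * y (i + 1) ^ 2) / 144 := by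
        rw [← sum_div, sum_sub_distrib, sum_sub_distrib, mul_sum, mul_sum, mul_sum]
    _ ≤ ∑ i ∈ Ico 1 N, compactAvg y i ^ 2 := sum_le_sum fun i _ => le_compactAvg_sq y i

end CompactAverage

theorem compact_norm_equivalence (N : ℕ) (h : ℝ) (hh : 0 < h)
    (y : ℕ → ℝ) (hy0 : y 0 = 0) (hyN : y N = 0) :
    (5 / 12) * (∑ i ∈ Finset.Ico 1 N, (y i) ^ 2 * h) ≤
        (∑ i ∈ Finset.Ico 1 N, ((y (i - 1) + 10 * y i + y (i + 1)) / 12) ^ 2 * h) ∧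
      (∑ i ∈ Finset.Ico 1 N, ((y (i - 1) + 10 * y i + y (i + 1)) / 12) ^ 2 * h) ≤
        ∑ i ∈ Finset.Ico 1 N, (y i) ^ 2 * h := by
  simp only [← sum_mul, ← mul_assoc]
  exact ⟨mul_le_mul_of_nonneg_right (le_sum_compactAvg_sq hy0 hyN) hh.le,
    mul_le_mul_of_nonneg_right (sum_compactAvg_sq_le hy0 hyN) hh.le⟩
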